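/- arXiv:1507.06866 — 2 statements merged into one kernel-verified Lean document; each statement's English description precedes it below -/
import Mathlib

section
/- For positive integers n_i and f_i: if f_i ≤ n_i then n_i·log((n_i+f_i)/n_i) ≤ n_i·log 2 = n_i; if f_i > n_i then n_i·log((n_i+f_i)/n_i) ≤ n_i·(log(f_i/n_i) + 1). Consequently, if ∑_i n_i ≤ n and ∑_i f_i ≤ n, then ∑_i n_i·log((n_i+f_i)/n_i) ≤ 2n + ∑_{i: f_i>n_i} n_i log(f_i/n_i) ≤ 2n + n·(log e)/e = O(n). -/
/-!
For `b ≤ a` the ratio `(a + b) / a` is at most `2`, and for `a < b` it is at most `2 (b / a)`; so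
each term `a log₂ ((a + b) / a)` costs at most `a`, plus `a log₂ (b / a)` when `a < b`, and the
costs `a` add up to `∑ nᵢ ≤ n`. For the remaining terms, `log y ≤ y / e` (which is `log x ≤ x - 1`
at `x = y / e`) with `y = b / a` gives `a log (b / a) ≤ b / e`, and `∑ fᵢ ≤ n`.
-/

open Real

lemma mul_log_div_le_div_exp {a b : ℝ} (ha : 0 ≤ a) (hb : 0 ≤ b) :
    a * log (b / a) ≤ b / exp 1 := by
  rcases ha.eq_or_lt with rfl | ha
  · simpa using div_nonneg hb (exp_pos 1).le
  rcases hb.eq_or_lt with rfl | hb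
  · simp
  have h := log_le_sub_one_of_pos (show 0 < b / (a * exp 1) by positivity)
  rw [log_div hb.ne' (by positivity), log_mul ha.ne' (exp_pos 1).ne', log_exp] at h
  calc a * log (b / a) = a * (log b - (log a + 1)) + a := by rw [log_div hb.ne' ha.ne']; ring
    _ ≤ a * (b / (a * exp 1) - 1) + a := by gcongr
    _ = b / exp 1 := by field_simp; ring

lemma mul_logb_div_le {c a b : ℝ} (hc : 1 < c) (ha : 0 ≤ a) (hb : 0 ≤ b) :
    a * logb c (b / a) ≤ b * logb c (exp 1) / exp 1 := by
  have hlogc : 0 < log c := log_pos hc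
  calc a * logb c (b / a) = a * log (b / a) / log c := by rw [logb, mul_div_assoc]
    _ ≤ b / exp 1 / log c := by gcongr; exact mul_log_div_le_div_exp ha hb
    _ = b * logb c (exp 1) / exp 1 := by rw [logb, log_exp]; ring

lemma mul_logb_two_add_div_le_self {a b : ℝ} (hb : 0 ≤ b) (hba : b ≤ a) :
    a * logb 2 ((a + b) / a) ≤ a := by
  rcases (hb.trans hba).eq_or_lt with rfl | ha
  · simp
  have hle : (a + b) / a ≤ 2 := by rw [div_le_iff₀ ha]; linarith
  calc a * logb 2 ((a + b) / a) ≤ a * logb 2 2 :=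
        mul_le_mul_of_nonneg_left (logb_le_logb_of_le one_lt_two (by positivity) hle) ha.le
    _ = a := by rw [logb_self_eq_one one_lt_two, mul_one]

lemma mul_logb_two_add_div_le {a b : ℝ} (ha : 0 ≤ a) (hab : a ≤ b) :
    a * logb 2 ((a + b) / a) ≤ a * (logb 2 (b / a) + 1) := by
  rcases ha.eq_or_lt with rfl | ha
  · simp
  have hb := ha.trans_le hab
  have hle : (a + b) / a ≤ 2 * (b / a) := by
    rw [mul_div_assoc', div_le_div_iff_of_pos_right ha]; linarith
  gcongr
  calc logb 2 ((a + b) / a) ≤ logb 2 (2 * (b / a)) :=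
        logb_le_logb_of_le one_lt_two (by positivity) hle
    _ = logb 2 (b / a) + 1 := by
        rw [logb_mul two_ne_zero (by positivity), logb_self_eq_one one_lt_two, add_comm]

lemma sum_mul_logb_two_add_div_le {ι : Type*} (s : Finset ι) (a b : ι → ℝ)
    (ha : ∀ i, 0 ≤ a i) (hb : ∀ i, 0 ≤ b i) :
    ∑ i ∈ s, a i * logb 2 ((a i + b i) / a i)
      ≤ ∑ i ∈ s, a i + ∑ i ∈ s with a i < b i, a i * logb 2 (b i / a i) := by
  rw [Finset.sum_filter, ← Finset.sum_add_distrib]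
  refine Finset.sum_le_sum fun i _ => ?_
  split_ifs with h
  · linarith [mul_logb_two_add_div_le (ha i) h.le]
  · simpa using mul_logb_two_add_div_le_self (hb i) (not_lt.1 h)

lemma sum_mul_logb_div_le {ι : Type*} (s : Finset ι) {c : ℝ} (hc : 1 < c) (a b : ι → ℝ)
    (ha : ∀ i, 0 ≤ a i) (hb : ∀ i, 0 ≤ b i) :
    ∑ i ∈ s, a i * logb c (b i / a i) ≤ (∑ i ∈ s, b i) * logb c (exp 1) / exp 1 := by
  rw [Finset.sum_mul, Finset.sum_div]
  exact Finset.sum_le_sum fun i _ => mul_logb_div_le hc (ha i) (hb i)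

theorem context_growth_general {ι : Type*} [Fintype ι] (ni fi : ι → ℕ) (n : ℝ)
    (hn1 : (∑ i, (ni i : ℝ)) ≤ n) (hn2 : (∑ i, (fi i : ℝ)) ≤ n) :
    (∀ i, fi i ≤ ni i →
        (ni i : ℝ) * Real.logb 2 (((ni i : ℝ) + fi i) / ni i) ≤ (ni i : ℝ))
    ∧ (∀ i, ni i < fi i →
        (ni i : ℝ) * Real.logb 2 (((ni i : ℝ) + fi i) / ni i)
          ≤ (ni i : ℝ) * (Real.logb 2 ((fi i : ℝ) / ni i) + 1))
    ∧ (∑ i, (ni i : ℝ) * Real.logb 2 (((ni i : ℝ) + fi i) / ni i))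
        ≤ 2 * n + ∑ i ∈ Finset.univ.filter (fun i => ni i < fi i),
            (ni i : ℝ) * Real.logb 2 ((fi i : ℝ) / ni i)
    ∧ (2 * n + ∑ i ∈ Finset.univ.filter (fun i => ni i < fi i),
            (ni i : ℝ) * Real.logb 2 ((fi i : ℝ) / ni i))
        ≤ 2 * n + n * Real.logb 2 (Real.exp 1) / Real.exp 1 := by
  have hni (i : ι) : (0 : ℝ) ≤ ni i := Nat.cast_nonneg _
  have hfi (i : ι) : (0 : ℝ) ≤ fi i := Nat.cast_nonneg _
  refine ⟨fun i h => mul_logb_two_add_div_le_self (hfi i) (Nat.cast_le.2 h),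
    fun i h => mul_logb_two_add_div_le (hni i) (Nat.cast_le.2 h.le), ?_, ?_⟩
  · have h := sum_mul_logb_two_add_div_le Finset.univ _ _ hni hfi
    simp only [Nat.cast_lt] at h
    linarith [Finset.sum_nonneg fun i (_ : i ∈ Finset.univ) => hni i]
  · have hlog : 0 ≤ logb 2 (exp 1) := (logb_pos one_lt_two (one_lt_exp_iff.2 one_pos)).le
    have hsum : ∑ i ∈ Finset.univ.filter (fun i => ni i < fi i), (fi i : ℝ) ≤ n :=
      (Finset.sum_le_sum_of_subset_of_nonneg (Finset.filter_subset _ _)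
        fun i _ _ => hfi i).trans hn2
    have h := sum_mul_logb_div_le (Finset.univ.filter fun i => ni i < fi i) one_lt_two _ _ hni hfi
    have : (∑ i ∈ Finset.univ.filter (fun i => ni i < fi i), (fi i : ℝ)) * logb 2 (exp 1)
        / exp 1 ≤ n * logb 2 (exp 1) / exp 1 := by gcongr
    linarith

/-- for positive integers `n_i`, `f_i`: if `f_i ≤ n_i` then
`n_i·log₂((n_i+f_i)/n_i) ≤ n_i`; if `f_i > n_i` then
`n_i·log₂((n_i+f_i)/n_i) ≤ n_i·(log₂(f_i/n_i) + 1)`. Consequently, if `∑ n_i ≤ n` and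
`∑ f_i ≤ n` then `∑_i n_i·log₂((n_i+f_i)/n_i) ≤ 2n + ∑_{f_i>n_i} n_i log₂(f_i/n_i)
≤ 2n + n·(log₂ e)/e`. -/
theorem context_growth {ι : Type*} [Fintype ι] (ni fi : ι → ℕ) (n : ℝ)
    (hni : ∀ i, 0 < ni i) (hfi : ∀ i, 0 < fi i)
    (hn1 : (∑ i, (ni i : ℝ)) ≤ n) (hn2 : (∑ i, (fi i : ℝ)) ≤ n) :
    (∀ i, fi i ≤ ni i →
        (ni i : ℝ) * Real.logb 2 (((ni i : ℝ) + fi i) / ni i) ≤ (ni i : ℝ))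
    ∧ (∀ i, ni i < fi i →
        (ni i : ℝ) * Real.logb 2 (((ni i : ℝ) + fi i) / ni i)
          ≤ (ni i : ℝ) * (Real.logb 2 ((fi i : ℝ) / ni i) + 1))
    ∧ (∑ i, (ni i : ℝ) * Real.logb 2 (((ni i : ℝ) + fi i) / ni i))
        ≤ 2 * n + ∑ i ∈ Finset.univ.filter (fun i => ni i < fi i),
            (ni i : ℝ) * Real.logb 2 ((fi i : ℝ) / ni i)
    ∧ (2 * n + ∑ i ∈ Finset.univ.filter (fun i => ni i < fi i),
            (ni i : ℝ) * Real.logb 2 ((fi i : ℝ) / ni i))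
        ≤ 2 * n + n * Real.logb 2 (Real.exp 1) / Real.exp 1 :=
  context_growth_general ni fi n hn1 hn2
end

section
/- Let S be a string of length n over alphabet Σ, |Σ| = σ, and let S^M be the string of length ⌈n/ℓ⌉ over Σ^ℓ obtained by grouping consecutive blocks of ℓ symbols (assuming ℓ divides n). Then (n/ℓ)·H_0(S^M) ≤ n·H_k(S) + (n/ℓ)·k·log σ simultaneously for all k ≤ ℓ. -/
open scoped BigOperators

/-- Zeroth-order empirical entropy `H0 S = ∑_a (n_a/n) log₂(n/n_a)`. -/
noncomputable def H0 {α : Type*} [DecidableEq α] (S : List α) : ℝ :=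
  ∑ a ∈ S.toFinset,
    ((S.count a : ℝ) / S.length) * Real.logb 2 ((S.length : ℝ) / S.count a)

/-- The subsequence of symbols of `S` immediately following an occurrence of context `A`. -/
def ctxSub {α : Type*} [DecidableEq α] (S A : List α) : List α :=
  (List.range S.length).filterMap (fun j =>
    if (S.drop j).take A.length = A then (S.drop (j + A.length)).head? else none)

/-- `|S| · H_k(S) = ∑_{A ∈ Σ^k} |S_A| · H0(S_A)`. -/
noncomputable def nHk {σ : ℕ} (k : ℕ) (S : List (Fin σ)) : ℝ :=
  ∑ A : Fin k → Fin σ,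
    ((ctxSub S (List.ofFn A)).length : ℝ) * H0 (ctxSub S (List.ofFn A))

/-! By Gibbs' inequality, `|L| · H₀(L) ≤ ∑_{c ∈ L} -log₂ q(c)` for every sub-probability `q`
that is positive on the symbols of `L`. For the meta-string, let `q(c)` be the probability of the
block `c` under the source that emits its first `k` symbols uniformly and every later symbol with
its empirical frequency after the preceding `k` symbols in `S`. Then `-log₂ q(c)` is `k log₂ σ`
plus the empirical code lengths `-log₂ P(S[p+k] | S[p, p+k))` of the positions `p` of the block,
and these code lengths, summed over all positions of `S`, add up to exactly `n · H_k(S)`. -/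

namespace List

variable {α : Type*}

theorem sum_map_range {M : Type*} [AddCommMonoid M] (n : ℕ) (f : ℕ → M) :
    ((range n).map f).sum = ∑ i ∈ Finset.range n, f i :=
  rfl

theorem toChunks_go_eq {n : ℕ} (xs : List α) (acc₁ : Array α) (acc₂ : Array (List α))
    (hpos : 0 < acc₁.size) (hle : acc₁.size ≤ n) :
    toChunks.go n xs acc₁ acc₂ = acc₂.toList ++
      (acc₁.toList ++ xs.take (n - acc₁.size)) :: (xs.drop (n - acc₁.size)).toChunks n := by
  induction xs generalizing acc₁ acc₂ with
  | nil => simp [toChunks.go, toChunks]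
  | cons x xs ih =>
    rw [toChunks.go]
    by_cases h : acc₁.size = n
    · obtain ⟨n, rfl⟩ : ∃ n', n = n' + 1 := ⟨n - 1, by omega⟩
      have hx : (x :: xs).toChunks (n + 1) = toChunks.go (n + 1) xs #[x] #[] := rfl
      rw [if_pos (beq_iff_eq.2 h), ih _ _ (by simp) (by simp), h, Nat.sub_self, take_zero,
        drop_zero, hx, ih _ _ (by simp) (by simp)]
      simp
    · rw [if_neg (by simpa using h), ih _ _ (by simp) (by simp; omega)]
      obtain ⟨d, hd⟩ : ∃ d, n - acc₁.size = d + 1 := ⟨n - acc₁.size - 1, by omega⟩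
      have hd' : n - (acc₁.size + 1) = d := by omega
      simp [hd, hd']

theorem toChunks_eq_cons {n : ℕ} (hn : 0 < n) {l : List α} (hl : l ≠ []) :
    l.toChunks n = l.take n :: (l.drop n).toChunks n := by
  obtain ⟨x, xs, rfl⟩ := exists_cons_of_ne_nil hl
  obtain ⟨n, rfl⟩ : ∃ n', n = n' + 1 := ⟨n - 1, by omega⟩
  show toChunks.go (n + 1) xs #[x] #[] = _
  rw [toChunks_go_eq xs _ _ (by simp) (by simp)]
  simp

theorem toChunks_eq_map_range {n m : ℕ} (hn : 0 < n) {l : List α} (hl : l.length = m * n) :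
    l.toChunks n = (range m).map fun i => (l.drop (i * n)).take n := by
  induction m generalizing l with
  | zero => simp_all [toChunks]
  | succ m ih =>
    have hl' : l ≠ [] := by rintro rfl; simp at hl; omega
    rw [toChunks_eq_cons hn hl', ih (by simp [hl, Nat.succ_mul]), range_succ_eq_map]
    simp [drop_drop, Nat.succ_mul, Nat.add_comm]

theorem exists_ofFn_eq {l : List α} {n : ℕ} (h : l.length = n) :
    ∃ v : Fin n → α, ofFn v = l := by
  subst h; exact ⟨_, ofFn_getElem⟩

theorem sum_map_filterMap {β M : Type*} [AddCommMonoid M] (l : List α)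
    (F : α → Option β) (f : β → M) :
    ((l.filterMap F).map f).sum = (l.map fun a => (F a).elim 0 f).sum := by
  induction l with
  | nil => rfl
  | cons a l ih => cases h : F a <;> simp [h, ih]

end List

open Finset

theorem sum_ite_ofFn_eq {α M : Type*} [Fintype α] [DecidableEq α] [AddCommMonoid M] (k : ℕ)
    (l : List α) (x : M) :
    ∑ A : Fin k → α, (if l = List.ofFn A then x else 0) = if l.length = k then x else 0 := by
  split_ifs with hl
  · obtain ⟨v, rfl⟩ := List.exists_ofFn_eq hl
    simp [List.ofFn_inj]
  · refine sum_eq_zero fun A _ => if_neg ?_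
    rintro rfl
    exact hl (List.length_ofFn)

theorem sum_toFinset_le_sum_ofFn {α M : Type*} [Fintype α] [DecidableEq α] [AddCommMonoid M]
    [PartialOrder M] [IsOrderedAddMonoid M] {f : List α → M} (hf : ∀ c, 0 ≤ f c) {n : ℕ}
    (L : List (List α)) (hL : ∀ c ∈ L, c.length = n) :
    ∑ c ∈ L.toFinset, f c ≤ ∑ v : Fin n → α, f (List.ofFn v) := by
  have hsub : L.toFinset ⊆ univ.image List.ofFn := fun c hc => by
    obtain ⟨v, hv⟩ := List.exists_ofFn_eq (hL c (List.mem_toFinset.1 hc))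
    exact mem_image.2 ⟨v, mem_univ v, hv⟩
  calc ∑ c ∈ L.toFinset, f c ≤ ∑ c ∈ univ.image List.ofFn, f c :=
        sum_le_sum_of_subset_of_nonneg hsub fun c _ _ => hf c
    _ = ∑ v : Fin n → α, f (List.ofFn v) := sum_image fun v _ w _ h => List.ofFn_injective h

theorem sum_range_sum_range_le_sum_range_mul {M : Type*} [AddCommMonoid M] [PartialOrder M]
    [IsOrderedAddMonoid M] {f : ℕ → M} (hf : ∀ p, 0 ≤ f p) {t ℓ : ℕ} (ht : t ≤ ℓ) (m : ℕ) :
    ∑ i ∈ range m, ∑ j ∈ range t, f (i * ℓ + j) ≤ ∑ p ∈ range (m * ℓ), f p := by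
  induction m with
  | zero => simp
  | succ m ih =>
    rw [sum_range_succ, Nat.succ_mul, sum_range_add]
    exact add_le_add ih (sum_le_sum_of_subset_of_nonneg (range_mono ht) fun j _ _ => hf _)

theorem card_pow_pos_of_add_le_length {α : Type*} [Fintype α] {S : List α} {pos k : ℕ}
    (h : pos + k ≤ S.length) :
    0 < (Fintype.card α : ℝ) ^ k := by
  rcases Nat.eq_zero_or_pos k with rfl | hk
  · simp
  · have : Nonempty α := ⟨S[pos]⟩
    positivity

theorem length_mul_H0_eq_sum {α : Type*} [DecidableEq α] (L : List α) :
    (L.length : ℝ) * H0 L = (L.map fun a => -Real.logb 2 (L.count a / L.length)).sum := by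
  rw [sum_list_map_count, H0, mul_sum]
  refine sum_congr rfl fun a ha => ?_
  have hpos : 0 < L.count a := List.count_pos_iff.2 (List.mem_toFinset.1 ha)
  have hlen : 0 < L.length := List.length_pos_of_mem (List.mem_toFinset.1 ha)
  rw [nsmul_eq_mul, ← Real.logb_inv, inv_div]
  field_simp

theorem length_mul_H0_le {α : Type*} [DecidableEq α] (L : List α) (q : α → ℝ)
    (hq : ∀ a ∈ L, 0 < q a) (hq_sum : ∑ a ∈ L.toFinset, q a ≤ 1) :
    (L.length : ℝ) * H0 L ≤ (L.map fun a => -Real.logb 2 (q a)).sum := by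
  have hterm_le : ∀ a ∈ L, -Real.logb 2 (L.count a / L.length) ≤
      -Real.logb 2 (q a) + (L.length * q a / L.count a - 1) / Real.log 2 := by
    intro a ha
    have hc : (0 : ℝ) < L.count a := by exact_mod_cast List.count_pos_iff.2 ha
    have hn : (0 : ℝ) < L.length := by exact_mod_cast List.length_pos_of_mem ha
    have hqa := hq a ha
    have hlog : Real.logb 2 (L.length * q a / L.count a)
        ≤ (L.length * q a / L.count a - 1) / Real.log 2 :=
      div_le_div_of_nonneg_right (Real.log_le_sub_one_of_pos (by positivity)) (by positivity)
    have hdiv : Real.logb 2 (L.length * q a / L.count a)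
        = Real.logb 2 (q a) - Real.logb 2 (L.count a / L.length) := by
      rw [← Real.logb_div hqa.ne' (by positivity)]
      field_simp
    linarith
  have hslack : (L.map fun a => (L.length * q a / L.count a - 1) / Real.log 2).sum
      = (L.length * ∑ a ∈ L.toFinset, q a - L.length) / Real.log 2 := by
    have hterm : ∀ a ∈ L.toFinset, L.count a • ((L.length * q a / L.count a - 1) / Real.log 2)
        = (L.length * q a - L.count a) / Real.log 2 := by
      intro a ha
      have hc : (0 : ℝ) < L.count a := by
        exact_mod_cast List.count_pos_iff.2 (List.mem_toFinset.1 ha)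
      rw [nsmul_eq_mul]
      field_simp
    have hcount : ∑ a ∈ L.toFinset, (L.count a : ℝ) = L.length := by
      exact_mod_cast List.sum_toFinset_count_eq_length L
    rw [sum_list_map_count, sum_congr rfl hterm, ← sum_div,
      sum_sub_distrib, ← mul_sum, hcount]
  calc (L.length : ℝ) * H0 L
      ≤ (L.map fun a =>
          -Real.logb 2 (q a) + (L.length * q a / L.count a - 1) / Real.log 2).sum := by
        rw [length_mul_H0_eq_sum]
        exact List.sum_le_sum hterm_le
    _ ≤ (L.map fun a => -Real.logb 2 (q a)).sum := by
        rw [List.sum_map_add, hslack, add_le_iff_nonpos_right]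
        refine div_nonpos_of_nonpos_of_nonneg ?_ (Real.log_nonneg one_le_two)
        nlinarith [hq_sum, (L.length.cast_nonneg : (0 : ℝ) ≤ L.length)]

section EmpiricalModel

variable {α : Type*} [DecidableEq α]

noncomputable def condFreq (S A : List α) (a : α) : ℝ :=
  ((ctxSub S A).count a : ℝ) / (ctxSub S A).length

noncomputable def condFreqAt (S : List α) (k p : ℕ) : ℝ :=
  S[p + k]?.elim 0 (condFreq S ((S.drop p).take k))

/-- Since `Real.logb 2 0 = 0`, this vanishes at positions `p` with no symbol `S[p + k]`. -/
noncomputable def codeLen (S : List α) (k p : ℕ) : ℝ :=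
  -Real.logb 2 (condFreqAt S k p)

theorem condFreq_nonneg (S A : List α) (a : α) : 0 ≤ condFreq S A a := by
  unfold condFreq; positivity

theorem condFreq_le_one (S A : List α) (a : α) : condFreq S A a ≤ 1 :=
  div_le_one_of_le₀ (by exact_mod_cast List.count_le_length) (Nat.cast_nonneg _)

theorem sum_condFreq_le_one [Fintype α] (S A : List α) : ∑ a, condFreq S A a ≤ 1 := by
  have hcount : ∑ a, ((ctxSub S A).count a : ℝ) = (ctxSub S A).length := by
    have := Multiset.sum_count_eq_card (s := univ) (m := (ctxSub S A : Multiset α))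
      fun a _ => mem_univ a
    simp only [Multiset.coe_count, Multiset.coe_card] at this
    exact_mod_cast this
  simp only [condFreq]
  rw [← sum_div, hcount]
  exact div_self_le_one _

theorem getElem_mem_ctxSub {S : List α} {k p : ℕ} (h : p + k < S.length) :
    S[p + k] ∈ ctxSub S ((S.drop p).take k) := by
  have hlen : ((S.drop p).take k).length = k := by simp; omega
  refine List.mem_filterMap.2 ⟨p, List.mem_range.2 (by omega), ?_⟩
  rw [hlen, if_pos rfl, List.head?_drop, List.getElem?_eq_getElem h]

theorem condFreqAt_pos {S : List α} {k p : ℕ} (h : p + k < S.length) : 0 < condFreqAt S k p := by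
  have hmem := getElem_mem_ctxSub h
  rw [condFreqAt, List.getElem?_eq_getElem h, Option.elim_some]
  exact div_pos (by exact_mod_cast List.count_pos_iff.2 hmem)
    (by exact_mod_cast List.length_pos_of_mem hmem)

theorem codeLen_nonneg (S : List α) (k p : ℕ) : 0 ≤ codeLen S k p := by
  have h01 : 0 ≤ condFreqAt S k p ∧ condFreqAt S k p ≤ 1 := by
    unfold condFreqAt
    cases S[p + k]? with
    | none => simp
    | some a => exact ⟨condFreq_nonneg .., condFreq_le_one ..⟩
  exact neg_nonneg.2 (Real.logb_nonpos one_lt_two h01.1 h01.2)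

theorem codeLen_eq_zero {S : List α} {k p : ℕ} (h : S.length ≤ p + k) : codeLen S k p = 0 := by
  simp [codeLen, condFreqAt, List.getElem?_eq_none h]

end EmpiricalModel

theorem sum_map_ctxSub {α M : Type*} [DecidableEq α] [AddCommMonoid M] (S A : List α)
    (f : α → M) :
    ((ctxSub S A).map f).sum = ∑ p ∈ range S.length,
      if (S.drop p).take A.length = A then S[p + A.length]?.elim 0 f else 0 := by
  rw [ctxSub, List.sum_map_filterMap, List.sum_map_range]
  refine sum_congr rfl fun p _ => ?_
  split_ifs <;> simp [List.head?_drop]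

theorem nHk_eq_sum_codeLen {σ : ℕ} (k : ℕ) (S : List (Fin σ)) :
    nHk k S = ∑ p ∈ range S.length, codeLen S k p := by
  have hA : ∀ A : Fin k → Fin σ, (ctxSub S (List.ofFn A)).length * H0 (ctxSub S (List.ofFn A))
      = ∑ p ∈ range S.length, if (S.drop p).take k = List.ofFn A then codeLen S k p else 0 := by
    intro A
    rw [length_mul_H0_eq_sum, sum_map_ctxSub, List.length_ofFn]
    refine sum_congr rfl fun p _ => ?_
    split_ifs with h
    · rw [codeLen, condFreqAt, h]
      cases S[p + k]? <;> simp [condFreq]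
    · rfl
  rw [nHk, sum_congr rfl fun A _ => hA A, sum_comm]
  refine sum_congr rfl fun p _ => ?_
  rw [sum_ite_ofFn_eq]
  split_ifs with h
  · rfl
  · exact (codeLen_eq_zero (by simp at h; omega)).symm

section ChunkModel

variable {α : Type*} [DecidableEq α]

/-- The probability of the word `r` under the empirical Markov model of `S` of order `|A|`,
started in context `A`. -/
noncomputable def wordProb (S : List α) : List α → List α → ℝ
  | _, [] => 1
  | A, a :: r => condFreq S A a * wordProb S ((A ++ [a]).drop 1) r

theorem wordProb_nonneg (S : List α) : ∀ A r, 0 ≤ wordProb S A r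
  | _, [] => zero_le_one
  | A, a :: r => mul_nonneg (condFreq_nonneg S A a) (wordProb_nonneg S _ r)

theorem sum_wordProb_le_one [Fintype α] (S : List α) (t : ℕ) (A : List α) :
    ∑ v : Fin t → α, wordProb S A (List.ofFn v) ≤ 1 := by
  induction t generalizing A with
  | zero => simp [wordProb]
  | succ t ih =>
    rw [← (Fin.consEquiv fun _ => α).sum_comp, Fintype.sum_prod_type]
    have hcons : ∀ a (w : Fin t → α), List.ofFn ((Fin.consEquiv fun _ => α) (a, w))
        = a :: List.ofFn w := fun a w => List.ofFn_cons a w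
    simp only [hcons, wordProb, ← mul_sum]
    calc ∑ a, condFreq S A a * ∑ w : Fin t → α, wordProb S ((A ++ [a]).drop 1) (List.ofFn w)
        ≤ ∑ a, condFreq S A a :=
          sum_le_sum fun a _ => mul_le_of_le_one_right (condFreq_nonneg S A a) (ih _)
      _ ≤ 1 := sum_condFreq_le_one S A

theorem wordProb_drop_take (S : List α) (k : ℕ) {t pos : ℕ} (h : pos + k + t ≤ S.length) :
    wordProb S ((S.drop pos).take k) ((S.drop (pos + k)).take t)
      = ∏ i ∈ range t, condFreqAt S k (pos + i) := by
  induction t generalizing pos with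
  | zero => simp [wordProb]
  | succ t ih =>
    have hlt : pos + k < S.length := by omega
    have hctx : ((S.drop pos).take k ++ [S[pos + k]]).drop 1 = (S.drop (pos + 1)).take k := by
      rw [show (S.drop pos).take k ++ [S[pos + k]] = (S.drop pos).take (k + 1) by
        simp [List.take_add_one, List.getElem?_eq_getElem hlt]]
      simp [List.drop_take, List.drop_drop]
    rw [List.drop_eq_getElem_cons hlt, List.take_succ_cons, wordProb, hctx,
      show pos + k + 1 = pos + 1 + k by omega, ih (by omega), prod_range_succ', mul_comm]
    congr 1
    · exact prod_congr rfl fun i _ => by rw [Nat.add_right_comm, Nat.add_assoc]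
    · simp [condFreqAt, List.getElem?_eq_getElem hlt]

noncomputable def chunkProb [Fintype α] (S : List α) (k : ℕ) (c : List α) : ℝ :=
  ((Fintype.card α : ℝ) ^ k)⁻¹ * wordProb S (c.take k) (c.drop k)

variable [Fintype α]

theorem chunkProb_nonneg (S : List α) (k : ℕ) (c : List α) : 0 ≤ chunkProb S k c :=
  mul_nonneg (by positivity) (wordProb_nonneg S _ _)

theorem sum_chunkProb_le_one (S : List α) (k t : ℕ) :
    ∑ v : Fin (k + t) → α, chunkProb S k (List.ofFn v) ≤ 1 := by
  have hsplit : ∀ (u : Fin k → α) (w : Fin t → α),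
      chunkProb S k (List.ofFn (Fin.appendEquiv k t (u, w)))
        = ((Fintype.card α : ℝ) ^ k)⁻¹ * wordProb S (List.ofFn u) (List.ofFn w) := by
    intro u w
    simp [chunkProb, Fin.appendEquiv, List.take_left', List.drop_left']
  rw [← (Fin.appendEquiv k t).sum_comp, Fintype.sum_prod_type]
  calc ∑ u, ∑ w, chunkProb S k (List.ofFn (Fin.appendEquiv k t (u, w)))
      = ∑ u : Fin k → α, ((Fintype.card α : ℝ) ^ k)⁻¹ *
          ∑ w : Fin t → α, wordProb S (List.ofFn u) (List.ofFn w) := by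
        simp only [hsplit, mul_sum]
    _ ≤ ∑ _u : Fin k → α, ((Fintype.card α : ℝ) ^ k)⁻¹ :=
        sum_le_sum fun u _ => mul_le_of_le_one_right (by positivity) (sum_wordProb_le_one S t _)
    _ ≤ 1 := by simpa using mul_inv_le_one

theorem chunkProb_drop_take (S : List α) {k t pos : ℕ} (h : pos + (k + t) ≤ S.length) :
    chunkProb S k ((S.drop pos).take (k + t))
      = ((Fintype.card α : ℝ) ^ k)⁻¹ * ∏ i ∈ range t, condFreqAt S k (pos + i) := by
  rw [chunkProb, List.take_take, min_eq_left (by omega), List.drop_take, List.drop_drop,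
    Nat.add_sub_cancel_left, wordProb_drop_take S k (by omega)]

theorem chunkProb_drop_take_pos (S : List α) {k t pos : ℕ} (h : pos + (k + t) ≤ S.length) :
    0 < chunkProb S k ((S.drop pos).take (k + t)) := by
  rw [chunkProb_drop_take S h]
  have hcard := card_pow_pos_of_add_le_length (S := S) (pos := pos) (k := k) (by omega)
  refine mul_pos (inv_pos.2 hcard) (prod_pos fun i hi => ?_)
  exact condFreqAt_pos (by simp at hi; omega)

theorem neg_logb_chunkProb_drop_take (S : List α) {k t pos : ℕ}
    (h : pos + (k + t) ≤ S.length) :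
    -Real.logb 2 (chunkProb S k ((S.drop pos).take (k + t)))
      = k * Real.logb 2 (Fintype.card α) + ∑ i ∈ range t, codeLen S k (pos + i) := by
  have hfreq : ∀ i ∈ range t, condFreqAt S k (pos + i) ≠ 0 := by
    intro i hi
    exact (condFreqAt_pos (by simp at hi; omega)).ne'
  have hcard := card_pow_pos_of_add_le_length (S := S) (pos := pos) (k := k) (by omega)
  rw [chunkProb_drop_take S h, Real.logb_mul (inv_ne_zero hcard.ne') (prod_ne_zero_iff.2 hfreq),
    Real.logb_inv, Real.logb_pow, Real.logb_prod _ _ hfreq]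
  simp only [codeLen, sum_neg_distrib]
  ring

end ChunkModel

/-- Ferragina–Venturini: let `S^M = S.toChunks ℓ` be the meta-string obtained
by grouping consecutive blocks of `ℓ` symbols of `S` (with `ℓ ∣ |S|`).  Then simultaneously
for all `k ≤ ℓ`, `(n/ℓ)·H_0(S^M) ≤ n·H_k(S) + (n/ℓ)·k·log₂ σ`. -/
theorem ferragina_venturini {σ : ℕ} (S : List (Fin σ)) (ℓ : ℕ)
    (hℓ : 0 < ℓ) (hdvd : ℓ ∣ S.length) :
    ∀ k ≤ ℓ,
      ((S.toChunks ℓ).length : ℝ) * H0 (S.toChunks ℓ)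
        ≤ nHk k S + ((S.toChunks ℓ).length : ℝ) * k * Real.logb 2 σ := by
  intro k hk
  obtain ⟨t, rfl⟩ : ∃ t, ℓ = k + t := ⟨ℓ - k, by omega⟩
  obtain ⟨m, hm⟩ := hdvd
  have hS : S.length = m * (k + t) := by rw [hm, mul_comm]
  have hblock : ∀ i < m, i * (k + t) + (k + t) ≤ S.length := fun i hi => by
    rw [hS]; nlinarith
  rw [List.toChunks_eq_map_range hℓ hS]
  set blocks := (List.range m).map fun i => (S.drop (i * (k + t))).take (k + t)
  have hlen : blocks.length = m := by simp [blocks]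
  calc (blocks.length : ℝ) * H0 blocks
      ≤ (blocks.map fun c => -Real.logb 2 (chunkProb S k c)).sum := by
        refine length_mul_H0_le blocks (chunkProb S k) ?_ ?_
        · simpa [blocks] using fun i hi => chunkProb_drop_take_pos S (hblock i hi)
        · refine (sum_toFinset_le_sum_ofFn (chunkProb_nonneg S k) blocks ?_).trans
            (sum_chunkProb_le_one S k t)
          simpa [blocks] using fun i hi => by have := hblock i hi; omega
    _ = ∑ i ∈ range m,
          (k * Real.logb 2 σ + ∑ j ∈ range t, codeLen S k (i * (k + t) + j)) := by
        rw [List.map_map, List.sum_map_range]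
        exact sum_congr rfl fun i hi =>
          by simpa using neg_logb_chunkProb_drop_take S (hblock i (mem_range.1 hi))
    _ ≤ nHk k S + blocks.length * k * Real.logb 2 σ := by
        rw [sum_add_distrib, sum_const, card_range, nsmul_eq_mul, nHk_eq_sum_codeLen, hS, hlen]
        linarith [sum_range_sum_range_le_sum_range_mul (codeLen_nonneg S k)
          (Nat.le_add_left t k) m]
end
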